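/- Let σ be a length-minimal solution of a word equation U = V (assume both U and V begin and end with a letter). If a^k is a maximal block of the letter a in σ(U) (an occurrence of a^k not extendable by a on either side), then a^k has an occurrence in σ(U) or σ(V) that is explicit or crossing, or is a prefix or suffix of σ(X) for some variable X (i.e., the length k is 'visible'). -/

import Mathlib

/-!
Suppose every maximal block `a^k` of `σ(U)` and of `σ(V)` is implicit and no `σ(X)` begins or
ends with `a^k`. Erasing every maximal run `a^k` that follows a letter other than `a`
(`dropBlocks`) then commutes with the substitution: each such block lies strictly inside some
`σ(X)`, and every run crossing the boundary of a piece has length different from `k`. Hence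
`X ↦ dropBlocks (σ X)` is again a solution with nonempty values, and it is strictly shorter,
because the given block cannot sit at position `0` (it would be a prefix of the first variable).
-/

variable {Γ 𝒳 : Type*}

def subApp (σ : 𝒳 → List Γ) (w : List (Γ ⊕ 𝒳)) : List Γ :=
  w.flatMap (Sum.elim (fun a => [a]) σ)

def occursAt (s p : List Γ) (i : ℕ) : Prop :=
  i + p.length ≤ s.length ∧ (s.drop i).take p.length = p

/-- `a^k` occurs at position `i` of `s` as a maximal block: it cannot be extended
by the letter `a` on either side. -/
def maxBlockAt (s : List Γ) (a : Γ) (k i : ℕ) : Prop :=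
  occursAt s (List.replicate k a) i ∧
  (∀ p, p + 1 = i → s[p]? ≠ some a) ∧ s[i + k]? ≠ some a

def explicitAt (σ : 𝒳 → List Γ) (U : List (Γ ⊕ 𝒳)) (i len : ℕ) : Prop :=
  ∀ p, i ≤ p → p < i + len →
    ∃ (j : ℕ) (x : Γ), U[j]? = some (Sum.inl x) ∧ (subApp σ (U.take j)).length = p

def implicitAt (σ : 𝒳 → List Γ) (U : List (Γ ⊕ 𝒳)) (i len : ℕ) : Prop :=
  ∃ (j : ℕ) (X : 𝒳), U[j]? = some (Sum.inr X) ∧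
    (subApp σ (U.take j)).length ≤ i ∧ i + len ≤ (subApp σ (U.take (j + 1))).length

section Runs

variable [DecidableEq Γ] (a : Γ) (k : ℕ)

def leadingCount : List Γ → ℕ
  | [] => 0
  | x :: t => if x = a then leadingCount t + 1 else 0

def dropLeadingBlock (w : List Γ) : List Γ :=
  if leadingCount a w = k then w.drop k else w

/-- Erases every maximal run `a^k` that follows a letter other than `a`; a leading run of `a`s
is kept whatever its length. -/
def dropBlocks : List Γ → List Γ
  | [] => []
  | x :: t => if x = a then a :: dropBlocks t else x :: dropLeadingBlock a k (dropBlocks t)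

variable {a k}

@[simp] lemma leadingCount_nil : leadingCount a [] = 0 := rfl

@[simp] lemma leadingCount_cons_self (t : List Γ) :
    leadingCount a (a :: t) = leadingCount a t + 1 := by
  simp [leadingCount]

lemma leadingCount_cons_of_ne {x : Γ} (hx : x ≠ a) (t : List Γ) :
    leadingCount a (x :: t) = 0 := by
  simp [leadingCount, hx]

lemma leadingCount_replicate_append (n : ℕ) (w : List Γ) :
    leadingCount a (List.replicate n a ++ w) = n + leadingCount a w := by
  induction n with
  | zero => simp
  | succ n ih => simp [List.replicate_succ, ih]; omega

lemma leadingCount_replicate (n : ℕ) : leadingCount a (List.replicate n a) = n := by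
  simpa using leadingCount_replicate_append (a := a) n []

lemma leadingCount_eq_zero {w : List Γ} (hw : w.head? ≠ some a) : leadingCount a w = 0 := by
  cases w with
  | nil => rfl
  | cons x t => exact leadingCount_cons_of_ne (by simpa using hw) t

lemma exists_eq_replicate_leadingCount_append (w : List Γ) :
    ∃ w', w = List.replicate (leadingCount a w) a ++ w' ∧ w'.head? ≠ some a := by
  induction w with
  | nil => exact ⟨[], rfl, by simp⟩
  | cons x t ih =>
    by_cases hx : x = a
    · obtain ⟨w', ht, hw'⟩ := ih
      subst x
      refine ⟨w', ?_, hw'⟩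
      rw [leadingCount_cons_self, List.replicate_succ, List.cons_append, ← ht]
    · exact ⟨x :: t, by simp [leadingCount_cons_of_ne hx], by simpa using hx⟩

lemma leadingCount_lt_length_of_mem {b : Γ} {v : List Γ} (hb : b ∈ v) (hba : b ≠ a) :
    leadingCount a v < v.length := by
  induction v with
  | nil => simp at hb
  | cons x t ih =>
    by_cases hx : x = a
    · subst x
      simpa using ih ((List.mem_cons.1 hb).resolve_left hba)
    · simp [leadingCount_cons_of_ne hx]

lemma leadingCount_append_of_mem {b : Γ} {v : List Γ} (hb : b ∈ v) (hba : b ≠ a)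
    (z : List Γ) : leadingCount a (v ++ z) = leadingCount a v := by
  induction v with
  | nil => simp at hb
  | cons x t ih =>
    by_cases hx : x = a
    · subst x
      simpa using ih ((List.mem_cons.1 hb).resolve_left hba)
    · simp [leadingCount_cons_of_ne hx]

lemma eq_replicate_or_eq_append_cons_replicate (p : List Γ) :
    (∃ t, p = List.replicate t a) ∨
      ∃ α x t, x ≠ a ∧ p = α ++ x :: List.replicate t a := by
  induction p using List.reverseRecOn with
  | nil => exact .inl ⟨0, rfl⟩
  | append_singleton q y ih =>
    by_cases hy : y = a
    · subst hy
      rcases ih with ⟨t, rfl⟩ | ⟨α, x, t, hx, rfl⟩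
      · exact .inl ⟨t + 1, by rw [List.replicate_succ']⟩
      · exact .inr ⟨α, x, t + 1, hx, by simp [List.replicate_succ']⟩
    · exact .inr ⟨q, y, 0, hy, rfl⟩

@[simp] lemma dropLeadingBlock_nil : dropLeadingBlock a k [] = [] := by
  simp [dropLeadingBlock]

lemma dropLeadingBlock_of_ne {w : List Γ} (h : leadingCount a w ≠ k) :
    dropLeadingBlock a k w = w :=
  if_neg h

lemma dropLeadingBlock_append_of_mem {b : Γ} {v : List Γ} (hb : b ∈ v) (hba : b ≠ a)
    (z : List Γ) : dropLeadingBlock a k (v ++ z) = dropLeadingBlock a k v ++ z := by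
  have hlt := leadingCount_lt_length_of_mem (a := a) hb hba
  unfold dropLeadingBlock
  rw [leadingCount_append_of_mem hb hba]
  split_ifs with h
  · exact List.drop_append_of_le_length (by omega)
  · rfl

lemma mem_dropLeadingBlock {b : Γ} {v : List Γ} (hb : b ∈ v) (hba : b ≠ a) :
    b ∈ dropLeadingBlock a k v := by
  obtain ⟨v', hv, -⟩ := exists_eq_replicate_leadingCount_append (a := a) v
  unfold dropLeadingBlock
  split_ifs with h
  · rw [hv, h, List.drop_left' (List.length_replicate ..)]
    rw [hv] at hb
    exact (List.mem_append.1 hb).resolve_left fun h' => hba (List.eq_of_mem_replicate h')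
  · exact hb

@[simp] lemma dropBlocks_nil : dropBlocks a k [] = [] := rfl

@[simp] lemma dropBlocks_cons_self (t : List Γ) :
    dropBlocks a k (a :: t) = a :: dropBlocks a k t := by
  simp [dropBlocks]

lemma dropBlocks_cons_of_ne {x : Γ} (hx : x ≠ a) (t : List Γ) :
    dropBlocks a k (x :: t) = x :: dropLeadingBlock a k (dropBlocks a k t) := by
  simp [dropBlocks, hx]

lemma dropBlocks_singleton (x : Γ) : dropBlocks a k [x] = [x] := by
  by_cases hx : x = a
  · subst x; simp
  · simp [dropBlocks_cons_of_ne hx]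

lemma mem_dropBlocks {b : Γ} {w : List Γ} (hb : b ∈ w) (hba : b ≠ a) :
    b ∈ dropBlocks a k w := by
  induction w with
  | nil => simp at hb
  | cons x t ih =>
    by_cases hx : x = a
    · subst x
      rw [dropBlocks_cons_self]
      exact List.mem_cons_of_mem _ (ih ((List.mem_cons.1 hb).resolve_left hba))
    · rw [dropBlocks_cons_of_ne hx]
      rcases List.mem_cons.1 hb with rfl | hbt
      · exact List.mem_cons_self
      · exact List.mem_cons_of_mem _ (mem_dropLeadingBlock (ih hbt) hba)

lemma dropBlocks_ne_nil {w : List Γ} (hw : w ≠ []) : dropBlocks a k w ≠ [] := by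
  cases w with
  | nil => exact absurd rfl hw
  | cons x t => unfold dropBlocks; split_ifs <;> simp

lemma leadingCount_dropBlocks (w : List Γ) :
    leadingCount a (dropBlocks a k w) = leadingCount a w := by
  induction w with
  | nil => rfl
  | cons x t ih =>
    by_cases hx : x = a
    · subst x
      simp [ih]
    · rw [dropBlocks_cons_of_ne hx, leadingCount_cons_of_ne hx, leadingCount_cons_of_ne hx]

lemma dropBlocks_replicate_append (n : ℕ) (w : List Γ) :
    dropBlocks a k (List.replicate n a ++ w) = List.replicate n a ++ dropBlocks a k w := by
  induction n with
  | zero => rfl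
  | succ n ih => simp [List.replicate_succ, ih]

lemma dropBlocks_replicate (n : ℕ) :
    dropBlocks a k (List.replicate n a) = List.replicate n a := by
  simpa using dropBlocks_replicate_append (a := a) (k := k) n []

lemma length_dropBlocks_le (w : List Γ) : (dropBlocks a k w).length ≤ w.length := by
  induction w with
  | nil => rfl
  | cons x t ih =>
    by_cases hx : x = a
    · subst x; simpa using ih
    · rw [dropBlocks_cons_of_ne hx, List.length_cons, List.length_cons, dropLeadingBlock]
      split_ifs
      · simp only [List.length_drop]; omega
      · omega

lemma dropBlocks_append_cons {x : Γ} (hx : x ≠ a) (u w : List Γ) :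
    dropBlocks a k (u ++ x :: w) =
      dropBlocks a k (u ++ [x]) ++ dropLeadingBlock a k (dropBlocks a k w) := by
  induction u with
  | nil => simp [dropBlocks_cons_of_ne hx]
  | cons y u ih =>
    by_cases hy : y = a
    · subst hy; simp [ih]
    · have hxmem : x ∈ dropBlocks a k (u ++ [x]) := mem_dropBlocks (by simp) hx
      simp only [List.cons_append, dropBlocks_cons_of_ne hy, ih,
        dropLeadingBlock_append_of_mem hxmem hx]

lemma dropBlocks_append {p w : List Γ}
    (hp : ∀ α x t, x ≠ a → p = α ++ x :: List.replicate t a →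
      t ≠ k ∧ t + leadingCount a w ≠ k) :
    dropBlocks a k (p ++ w) = dropBlocks a k p ++ dropBlocks a k w := by
  rcases eq_replicate_or_eq_append_cons_replicate (a := a) p with
    ⟨t, rfl⟩ | ⟨α, x, t, hx, rfl⟩
  · rw [dropBlocks_replicate_append, dropBlocks_replicate]
  · obtain ⟨ht, htw⟩ := hp α x t hx rfl
    rw [List.append_assoc, List.cons_append, dropBlocks_append_cons hx,
      dropBlocks_append_cons hx α (List.replicate t a), dropBlocks_replicate_append,
      dropBlocks_replicate,
      dropLeadingBlock_of_ne (by rwa [leadingCount_replicate_append, leadingCount_dropBlocks]),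
      dropLeadingBlock_of_ne (by rwa [leadingCount_replicate]),
      List.append_assoc]

end Runs

section Blocks

variable {a : Γ} {k : ℕ}

lemma maxBlockAt_iff {w : List Γ} {i : ℕ} :
    maxBlockAt w a k i ↔ ∃ L R, w = L ++ List.replicate k a ++ R ∧ L.length = i ∧
      L.getLast? ≠ some a ∧ R.head? ≠ some a := by
  constructor
  · rintro ⟨⟨hlen, hocc⟩, hleft, hright⟩
    rw [List.length_replicate] at hlen hocc
    refine ⟨w.take i, w.drop (i + k), ?_, by simp; omega, ?_, by rwa [List.head?_drop]⟩
    · rw [← hocc, ← List.drop_drop, List.append_assoc, List.take_append_drop,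
        List.take_append_drop]
    · rw [List.getLast?_take]
      split_ifs with hi
      · simp
      · rw [List.getElem?_eq_getElem (by omega), Option.some_or]
        rw [← List.getElem?_eq_getElem (by omega)]
        exact hleft _ (by omega)
  · rintro ⟨L, R, rfl, rfl, hL, hR⟩
    refine ⟨⟨by simp, by simp⟩, fun p hp => ?_, ?_⟩
    · obtain rfl : p = L.length - 1 := by omega
      rwa [List.append_assoc, List.getElem?_append_left (by omega), ← List.getLast?_eq_getElem?]
    · rwa [List.getElem?_append_right (by simp), List.length_append, List.length_replicate,
        Nat.sub_self, ← List.head?_eq_getElem?]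

lemma maxBlockAt_append_left {i : ℕ} {w : List Γ} (u : List Γ) (hi : 1 ≤ i)
    (h : maxBlockAt w a k i) : maxBlockAt (u ++ w) a k (u.length + i) := by
  obtain ⟨L, R, rfl, rfl, hL, hR⟩ := maxBlockAt_iff.1 h
  refine maxBlockAt_iff.2 ⟨u ++ L, R, by simp, by simp, ?_, hR⟩
  rwa [List.getLast?_append_of_ne_nil _ (List.ne_nil_of_length_pos hi)]

end Blocks

section Substitution

variable {σ : 𝒳 → List Γ}

lemma subApp_cons (σ : 𝒳 → List Γ) (s : Γ ⊕ 𝒳) (U : List (Γ ⊕ 𝒳)) :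
    subApp σ (s :: U) = subApp σ [s] ++ subApp σ U := by
  simp [subApp]

@[simp] lemma subApp_singleton_inl (σ : 𝒳 → List Γ) (x : Γ) :
    subApp σ [Sum.inl x] = [x] := by
  simp [subApp]

@[simp] lemma subApp_singleton_inr (σ : 𝒳 → List Γ) (X : 𝒳) :
    subApp σ [Sum.inr X] = σ X := by
  simp [subApp]

lemma subApp_singleton_ne_nil (hne : ∀ X, σ X ≠ []) (s : Γ ⊕ 𝒳) :
    subApp σ [s] ≠ [] := by
  cases s <;> simp [hne]

lemma implicitAt_cons {s : Γ ⊕ 𝒳} {U : List (Γ ⊕ 𝒳)} {i len : ℕ} :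
    implicitAt σ (s :: U) i len ↔ (∃ Y, s = Sum.inr Y ∧ i + len ≤ (σ Y).length) ∨
      ((subApp σ [s]).length ≤ i ∧ implicitAt σ U (i - (subApp σ [s]).length) len) := by
  constructor
  · rintro ⟨_ | j, Y, hj, h₁, h₂⟩
    · simp only [List.getElem?_cons_zero, Option.some.injEq] at hj
      subst hj
      exact .inl ⟨Y, rfl, by simpa using h₂⟩
    · rw [List.take_succ_cons, subApp_cons, List.length_append] at h₁ h₂
      exact .inr ⟨by omega, j, Y, hj, by omega, by omega⟩
  · rintro (⟨Y, rfl, h⟩ | ⟨h, j, Y, hj, h₁, h₂⟩)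
    · exact ⟨0, Y, rfl, by simp [subApp], by simpa using h⟩
    · refine ⟨j + 1, Y, hj, ?_, ?_⟩ <;>
        rw [List.take_succ_cons, subApp_cons, List.length_append] <;> omega

lemma implicitAt.of_cons {s : Γ ⊕ 𝒳} {U : List (Γ ⊕ 𝒳)} {i len : ℕ} (hlen : 1 ≤ len)
    (h : implicitAt σ (s :: U) ((subApp σ [s]).length + i) len) : implicitAt σ U i len := by
  rcases implicitAt_cons.1 h with ⟨Y, rfl, hY⟩ | ⟨-, h⟩
  · simp only [subApp_singleton_inr] at hY
    omega
  · simpa using h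

lemma exists_prefix_of_implicitAt_zero (hne : ∀ X, σ X ≠ []) {U : List (Γ ⊕ 𝒳)}
    {w : List Γ} (h : implicitAt σ U 0 w.length) (hw : w <+: subApp σ U) :
    ∃ Y, Sum.inr Y ∈ U ∧ w <+: σ Y := by
  cases U with
  | nil =>
    obtain ⟨j, Y, hj, -⟩ := h
    simp at hj
  | cons s U =>
    rcases implicitAt_cons.1 h with ⟨Y, rfl, hY⟩ | ⟨h₀, -⟩
    · refine ⟨Y, List.mem_cons_self, List.prefix_of_prefix_length_le hw ?_ (by omega)⟩
      rw [subApp_cons, subApp_singleton_inr]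
      exact List.prefix_append _ _
    · exact absurd (List.length_eq_zero_iff.1 (by omega)) (subApp_singleton_ne_nil hne s)

lemma exists_prefix_of_maxBlockAt_zero {a : Γ} {k : ℕ} (hne : ∀ X, σ X ≠ [])
    {U : List (Γ ⊕ 𝒳)} (hb : maxBlockAt (subApp σ U) a k 0) (h : implicitAt σ U 0 k) :
    ∃ Y, Sum.inr Y ∈ U ∧ List.replicate k a <+: σ Y := by
  obtain ⟨L, R, hLR, hL, -, -⟩ := maxBlockAt_iff.1 hb
  rw [List.length_eq_zero_iff.1 hL, List.nil_append] at hLR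
  exact exists_prefix_of_implicitAt_zero hne (by simpa using h) ⟨R, hLR.symm⟩

end Substitution

section Homomorphism

variable [DecidableEq Γ] {a : Γ} {k : ℕ} {σ : 𝒳 → List Γ}

lemma add_leadingCount_ne (hne : ∀ X, σ X ≠ []) {s : Γ ⊕ 𝒳} {U : List (Γ ⊕ 𝒳)}
    (hpre : ∀ X, Sum.inr X ∈ U → ¬ List.replicate k a <+: σ X)
    (himp : ∀ i, 1 ≤ i → maxBlockAt (subApp σ (s :: U)) a k i →
      implicitAt σ (s :: U) i k)
    {α : List Γ} {x : Γ} {t : ℕ} (hx : x ≠ a)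
    (hp : subApp σ [s] = α ++ x :: List.replicate t a) (ht : t ≠ k) :
    t + leadingCount a (subApp σ U) ≠ k := by
  intro hsum
  have hplen : (subApp σ [s]).length = α.length + 1 + t := by simp [hp]; omega
  obtain ⟨w', hw, hw'⟩ := exists_eq_replicate_leadingCount_append (a := a) (subApp σ U)
  have hblock : maxBlockAt (subApp σ (s :: U)) a k (α.length + 1) := by
    refine maxBlockAt_iff.2 ⟨α ++ [x], w', ?_, by simp, by simpa using hx, hw'⟩
    rw [subApp_cons, hp, hw, ← hsum]
    simp only [List.replicate_add, List.append_assoc, List.cons_append, List.nil_append]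
  -- An implicit block lies inside the piece `s` (impossible: that needs `k ≤ t`) or begins where
  -- `U` begins (so `t = 0`), and is then a prefix of a variable of `U`.
  rcases implicitAt_cons.1 (himp _ (by omega) hblock) with ⟨Y, rfl, hY⟩ | ⟨hle, h₀⟩
  · simp only [subApp_singleton_inr] at hY hplen
    omega
  · obtain rfl : t = 0 := by omega
    rw [show α.length + 1 - (subApp σ [s]).length = 0 by omega] at h₀
    obtain ⟨Y, hY, hYpre⟩ := exists_prefix_of_implicitAt_zero hne
      (w := List.replicate k a) (by simpa using h₀)
      (by rw [hw, ← hsum, Nat.zero_add]; exact List.prefix_append _ _)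
    exact hpre Y hY hYpre

lemma dropBlocks_subApp_cons (hk : 1 ≤ k) (hne : ∀ X, σ X ≠ []) {s : Γ ⊕ 𝒳}
    {U : List (Γ ⊕ 𝒳)}
    (hfree : ∀ X, Sum.inr X ∈ s :: U →
      ¬ List.replicate k a <+: σ X ∧ ¬ List.replicate k a <:+ σ X)
    (himp : ∀ i, 1 ≤ i → maxBlockAt (subApp σ (s :: U)) a k i →
      implicitAt σ (s :: U) i k) :
    dropBlocks a k (subApp σ (s :: U)) =
      dropBlocks a k (subApp σ [s]) ++ dropBlocks a k (subApp σ U) := by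
  rw [subApp_cons]
  refine dropBlocks_append fun α x t hx hp => ?_
  have ht : t ≠ k := by
    rintro rfl
    cases s with
    | inl y =>
      have := congrArg List.length hp
      simp at this
      omega
    | inr X =>
      rw [subApp_singleton_inr] at hp
      exact (hfree X List.mem_cons_self).2 ⟨α ++ [x], by simp [hp]⟩
  exact ⟨ht, add_leadingCount_ne hne (fun X hX => (hfree X (.tail _ hX)).1) himp hx hp ht⟩

theorem dropBlocks_subApp (hk : 1 ≤ k) (hne : ∀ X, σ X ≠ []) {U : List (Γ ⊕ 𝒳)}
    (hfree : ∀ X, Sum.inr X ∈ U →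
      ¬ List.replicate k a <+: σ X ∧ ¬ List.replicate k a <:+ σ X)
    (himp : ∀ i, 1 ≤ i → maxBlockAt (subApp σ U) a k i → implicitAt σ U i k) :
    dropBlocks a k (subApp σ U) = subApp (dropBlocks a k ∘ σ) U := by
  induction U with
  | nil => rfl
  | cons s U ih =>
    have himp' : ∀ i, 1 ≤ i → maxBlockAt (subApp σ U) a k i → implicitAt σ U i k :=
      fun i hi hb => (himp _ (by omega)
        (by rw [subApp_cons]; exact maxBlockAt_append_left _ hi hb)).of_cons hk
    rw [dropBlocks_subApp_cons hk hne hfree himp, ih (fun X hX => hfree X (.tail _ hX)) himp',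
      subApp_cons (dropBlocks a k ∘ σ)]
    cases s <;> simp [dropBlocks_singleton]

lemma length_dropBlocks_lt {i : ℕ} {w : List Γ} (hk : 1 ≤ k) (hi : 1 ≤ i)
    (h : maxBlockAt w a k i) : (dropBlocks a k w).length < w.length := by
  obtain ⟨L, R, rfl, rfl, hL, hR⟩ := maxBlockAt_iff.1 h
  obtain ⟨β, x, rfl⟩ : ∃ β x, L = β ++ [x] :=
    (L.eq_nil_or_concat').resolve_left (List.ne_nil_of_length_pos hi)
  have hx : x ≠ a := by simpa using hL
  have hblock : leadingCount a (List.replicate k a ++ dropBlocks a k R) = k := by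
    rw [leadingCount_replicate_append, leadingCount_dropBlocks, leadingCount_eq_zero hR,
      Nat.add_zero]
  rw [List.append_assoc, List.append_assoc, List.singleton_append, dropBlocks_append_cons hx,
    dropBlocks_replicate_append, dropLeadingBlock, if_pos hblock,
    List.drop_left' (List.length_replicate ..)]
  have h₁ := length_dropBlocks_le (a := a) (k := k) (β ++ [x])
  have h₂ := length_dropBlocks_le (a := a) (k := k) R
  simp only [List.length_append, List.length_cons, List.length_replicate,
    List.length_nil] at h₁ ⊢
  omega

end Homomorphism

theorem stmt6_general (U V : List (Γ ⊕ 𝒳)) (σ : 𝒳 → List Γ)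
    (hsol : subApp σ U = subApp σ V)
    (hne : ∀ X : 𝒳, σ X ≠ [])
    (hmin : ∀ σ' : 𝒳 → List Γ, (∀ X : 𝒳, σ' X ≠ []) → subApp σ' U = subApp σ' V →
      (subApp σ U).length ≤ (subApp σ' U).length)
    (a : Γ) (k : ℕ) (hk : 1 ≤ k)
    (hblock : ∃ i, maxBlockAt (subApp σ U) a k i) :
    (∃ i, maxBlockAt (subApp σ U) a k i ∧
      (explicitAt σ U i k ∨ (¬ explicitAt σ U i k ∧ ¬ implicitAt σ U i k))) ∨
    (∃ i, maxBlockAt (subApp σ V) a k i ∧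
      (explicitAt σ V i k ∨ (¬ explicitAt σ V i k ∧ ¬ implicitAt σ V i k))) ∨
    (∃ X : 𝒳, (Sum.inr X ∈ U ∨ Sum.inr X ∈ V) ∧
      (List.replicate k a <+: σ X ∨ List.replicate k a <:+ σ X)) := by
  classical
  by_contra hcon
  have hfree : ∀ X, Sum.inr X ∈ U ∨ Sum.inr X ∈ V →
      ¬ List.replicate k a <+: σ X ∧ ¬ List.replicate k a <:+ σ X :=
    fun X hX => ⟨fun h => hcon (.inr (.inr ⟨X, hX, .inl h⟩)),
      fun h => hcon (.inr (.inr ⟨X, hX, .inr h⟩))⟩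
  have himpU : ∀ i, maxBlockAt (subApp σ U) a k i → implicitAt σ U i k :=
    fun i hb => by_contra fun h => hcon (.inl ⟨i, hb, by tauto⟩)
  have himpV : ∀ i, maxBlockAt (subApp σ V) a k i → implicitAt σ V i k :=
    fun i hb => by_contra fun h => hcon (.inr (.inl ⟨i, hb, by tauto⟩))
  have hhomU := dropBlocks_subApp hk hne (fun X hX => hfree X (.inl hX)) fun i _ => himpU i
  have hhomV := dropBlocks_subApp hk hne (fun X hX => hfree X (.inr hX)) fun i _ => himpV i
  obtain ⟨i, hb⟩ := hblock
  have hi : 1 ≤ i := Nat.one_le_iff_ne_zero.2 fun hi => by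
    subst hi
    obtain ⟨Y, hY, hYpre⟩ := exists_prefix_of_maxBlockAt_zero hne hb (himpU 0 hb)
    exact (hfree Y (.inl hY)).1 hYpre
  have hshorter := hmin (dropBlocks a k ∘ σ) (fun X => dropBlocks_ne_nil (hne X))
    (by rw [← hhomU, ← hhomV, hsol])
  rw [← hhomU] at hshorter
  exact absurd hshorter (not_le.2 (length_dropBlocks_lt hk hi hb))

/-- For a length-minimal solution σ of U = V (both sides beginning and ending with a letter),
every maximal block a^k of σ(U) has an occurrence in σ(U) or σ(V) that is explicit or
crossing (= neither explicit nor implicit), or a^k is a prefix or suffix of some σ(X). -/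
theorem stmt6 (U V : List (Γ ⊕ 𝒳)) (σ : 𝒳 → List Γ)
    (hUhead : ∃ x : Γ, U.head? = some (Sum.inl x))
    (hUlast : ∃ x : Γ, U.getLast? = some (Sum.inl x))
    (hVhead : ∃ x : Γ, V.head? = some (Sum.inl x))
    (hVlast : ∃ x : Γ, V.getLast? = some (Sum.inl x))
    (hsol : subApp σ U = subApp σ V)
    (hne : ∀ X : 𝒳, σ X ≠ [])
    (hmin : ∀ σ' : 𝒳 → List Γ, (∀ X : 𝒳, σ' X ≠ []) → subApp σ' U = subApp σ' V →
      (subApp σ U).length ≤ (subApp σ' U).length)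
    (a : Γ) (k : ℕ) (hk : 1 ≤ k)
    (hblock : ∃ i, maxBlockAt (subApp σ U) a k i) :
    (∃ i, maxBlockAt (subApp σ U) a k i ∧
      (explicitAt σ U i k ∨ (¬ explicitAt σ U i k ∧ ¬ implicitAt σ U i k))) ∨
    (∃ i, maxBlockAt (subApp σ V) a k i ∧
      (explicitAt σ V i k ∨ (¬ explicitAt σ V i k ∧ ¬ implicitAt σ V i k))) ∨
    (∃ X : 𝒳, (Sum.inr X ∈ U ∨ Sum.inr X ∈ V) ∧
      (List.replicate k a <+: σ X ∨ List.replicate k a <:+ σ X)) :=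
  stmt6_general U V σ hsol hne hmin a k hk hblock
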